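/- For every natural number N ≥ 2 there exist a quantum operation Φ_N on 2^N × 2^N complex matrices satisfying the dephasing-covariance condition Φ_N∘Δ = Δ∘Φ_N, and a 2^N × 2^N density matrix ρ_N, such that C_{l1}(Φ_N(ρ_N)) > C_{l1}(ρ_N). That is, the l1-coherence is not monotone under DIO (hence not under MIO) on N-qubit systems for any N ≥ 2. -/

import Mathlib

open Matrix BigOperators ComplexOrder

/-- The l1-coherence of a matrix: the sum of the absolute values of its
off-diagonal entries. -/
noncomputable def Cl1 {n : ℕ} (A : Matrix (Fin n) (Fin n) ℂ) : ℝ :=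
  ∑ i, ∑ j, if i ≠ j then ‖A i j‖ else 0

/-- A density matrix: positive semidefinite with trace 1. -/
def IsDensity {n : ℕ} (ρ : Matrix (Fin n) (Fin n) ℂ) : Prop :=
  ρ.PosSemidef ∧ ρ.trace = 1

/-- A quantum operation (CPTP map) given by a finite family of Kraus operators. -/
def IsQuantumOp {n : ℕ} (Φ : Matrix (Fin n) (Fin n) ℂ → Matrix (Fin n) (Fin n) ℂ) : Prop :=
  ∃ (m : ℕ) (K : Fin m → Matrix (Fin n) (Fin n) ℂ),
    (∑ i, (K i)ᴴ * K i) = 1 ∧ ∀ ρ, Φ ρ = ∑ i, K i * ρ * (K i)ᴴ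

/-- The dephasing map `Δ`, keeping only the diagonal part of a matrix. -/
def Deph {n : ℕ} (A : Matrix (Fin n) (Fin n) ℂ) : Matrix (Fin n) (Fin n) ℂ :=
  Matrix.of fun i j => if i = j then A i j else 0

/-! A counterexample in dimension 4 is transported to every dimension `n ≥ 4` by letting the
channel act as the identity on a complementary block and discard the off-diagonal blocks: this
keeps it a dephasing-covariant quantum operation and adds the same l1-coherence to a state and to
its image.

In dimension 4 the channel measures in the orthogonal basis `v` and prepares another vector of it,
`ρ ↦ ∑ₖₗ wₖₗ ⟨vₖ|ρ|vₖ⟩ |vₗ⟩⟨vₗ|`. The weights `w` make both `Δ ∘ Φ₄` and `Φ₄ ∘ Δ` equal to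
`ρ ↦ (tr ρ / 4) • 1`, so `Φ₄` is dephasing-covariant, yet it sends the pure state `|v₂⟩⟨v₂| / 2`,
of l1-coherence `1`, to a state of l1-coherence `23 / 18`. -/

lemma isQuantumOp_of_kraus {n : ℕ} {κ : Type*} [Fintype κ]
    {Φ : Matrix (Fin n) (Fin n) ℂ → Matrix (Fin n) (Fin n) ℂ} (K : κ → Matrix (Fin n) (Fin n) ℂ)
    (hK : ∑ k, (K k)ᴴ * K k = 1) (hΦ : ∀ ρ, Φ ρ = ∑ k, K k * ρ * (K k)ᴴ) : IsQuantumOp Φ := by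
  let e := (Fintype.equivFin κ).symm
  refine ⟨Fintype.card κ, K ∘ e, ?_, fun ρ => ?_⟩
  · rw [← hK]; exact e.sum_comp fun k => (K k)ᴴ * K k
  · rw [hΦ]; exact (e.sum_comp fun k => K k * ρ * (K k)ᴴ).symm

lemma deph_eq_diagonal_diag {n : ℕ} (A : Matrix (Fin n) (Fin n) ℂ) : Deph A = diagonal A.diag := by
  ext i j
  by_cases h : i = j <;> simp [Deph, diagonal, h]

lemma Matrix.PosSemidef.fromBlocks_zero {ι ι' : Type*} [Fintype ι] [Fintype ι']
    {A : Matrix ι ι ℂ} {D : Matrix ι' ι' ℂ} (hA : A.PosSemidef) (hD : D.PosSemidef) :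
    (fromBlocks A 0 0 D).PosSemidef := by
  refine .of_dotProduct_mulVec_nonneg (hA.isHermitian.fromBlocks (by simp) hD.isHermitian) ?_
  rintro x
  obtain ⟨x₁, x₂, rfl⟩ : ∃ x₁ x₂, x = Sum.elim x₁ x₂ := ⟨_, _, (Sum.elim_comp_inl_inr x).symm⟩
  simp only [fromBlocks_mulVec, Function.star_sumElim, sumElim_dotProduct_sumElim, zero_mulVec,
    add_zero, zero_add]
  exact add_nonneg (hA.dotProduct_mulVec_nonneg _) (hD.dotProduct_mulVec_nonneg _)

lemma diag_fromBlocks_zero {ι ι' : Type*} (A : Matrix ι ι ℂ) (D : Matrix ι' ι' ℂ) :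
    (fromBlocks A 0 0 D).diag = Sum.elim A.diag D.diag := by
  ext (i | i) <;> rfl

section BlockDiagonal

variable {m n r : ℕ} (e : Fin n ≃ Fin m ⊕ Fin r)

def diagBlocks (A : Matrix (Fin m) (Fin m) ℂ) (D : Matrix (Fin r) (Fin r) ℂ) :
    Matrix (Fin n) (Fin n) ℂ :=
  (fromBlocks A 0 0 D).submatrix e e

def blocks₁₁ (X : Matrix (Fin n) (Fin n) ℂ) : Matrix (Fin m) (Fin m) ℂ :=
  (X.submatrix e.symm e.symm).toBlocks₁₁

def blocks₂₂ (X : Matrix (Fin n) (Fin n) ℂ) : Matrix (Fin r) (Fin r) ℂ :=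
  (X.submatrix e.symm e.symm).toBlocks₂₂

lemma diagBlocks_mul (A A' : Matrix (Fin m) (Fin m) ℂ) (D D' : Matrix (Fin r) (Fin r) ℂ) :
    diagBlocks e A D * diagBlocks e A' D' = diagBlocks e (A * A') (D * D') := by
  simp [diagBlocks, submatrix_mul_equiv, fromBlocks_multiply]

lemma diagBlocks_conjTranspose (A : Matrix (Fin m) (Fin m) ℂ) (D : Matrix (Fin r) (Fin r) ℂ) :
    (diagBlocks e A D)ᴴ = diagBlocks e Aᴴ Dᴴ := by
  simp [diagBlocks, conjTranspose_submatrix, fromBlocks_conjTranspose]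

lemma diagBlocks_add (A A' : Matrix (Fin m) (Fin m) ℂ) (D D' : Matrix (Fin r) (Fin r) ℂ) :
    diagBlocks e A D + diagBlocks e A' D' = diagBlocks e (A + A') (D + D') := by
  have h := fromBlocks_add A 0 0 D A' 0 0 D'
  simp only [add_zero] at h
  rw [diagBlocks, diagBlocks, diagBlocks, ← h]
  rfl

lemma diagBlocks_one : diagBlocks e 1 1 = 1 := by
  simp [diagBlocks, fromBlocks_one, submatrix_one_equiv]

lemma sum_diagBlocks_zero {κ : Type*} [Fintype κ] (A : κ → Matrix (Fin m) (Fin m) ℂ) :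
    ∑ k, diagBlocks e (A k) 0 = diagBlocks e (∑ k, A k) 0 := by
  classical
  induction (Finset.univ : Finset κ) using Finset.induction_on with
  | empty => simp [diagBlocks]
  | insert k s hk ih => rw [Finset.sum_insert hk, Finset.sum_insert hk, ih, diagBlocks_add, add_zero]

lemma eq_submatrix_fromBlocks (X : Matrix (Fin n) (Fin n) ℂ) :
    X = (fromBlocks (blocks₁₁ e X) (X.submatrix e.symm e.symm).toBlocks₁₂
      (X.submatrix e.symm e.symm).toBlocks₂₁ (blocks₂₂ e X)).submatrix e e := by
  simp [blocks₁₁, blocks₂₂, fromBlocks_toBlocks, submatrix_submatrix]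

lemma diagBlocks_left_mul_mul_conjTranspose (A B : Matrix (Fin m) (Fin m) ℂ)
    (X : Matrix (Fin n) (Fin n) ℂ) :
    diagBlocks e A 0 * X * (diagBlocks e B 0)ᴴ = diagBlocks e (A * blocks₁₁ e X * Bᴴ) 0 := by
  conv_lhs => rw [eq_submatrix_fromBlocks e X]
  simp [diagBlocks, conjTranspose_submatrix, submatrix_mul_equiv, fromBlocks_multiply,
    fromBlocks_conjTranspose]

lemma diagBlocks_right_mul_mul_conjTranspose (A B : Matrix (Fin r) (Fin r) ℂ)
    (X : Matrix (Fin n) (Fin n) ℂ) :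
    diagBlocks e 0 A * X * (diagBlocks e 0 B)ᴴ = diagBlocks e 0 (A * blocks₂₂ e X * Bᴴ) := by
  conv_lhs => rw [eq_submatrix_fromBlocks e X]
  simp [diagBlocks, conjTranspose_submatrix, submatrix_mul_equiv, fromBlocks_multiply,
    fromBlocks_conjTranspose]

lemma blocks₁₁_diagBlocks (A : Matrix (Fin m) (Fin m) ℂ) (D : Matrix (Fin r) (Fin r) ℂ) :
    blocks₁₁ e (diagBlocks e A D) = A := by
  simp [blocks₁₁, diagBlocks, submatrix_submatrix]

lemma blocks₂₂_diagBlocks (A : Matrix (Fin m) (Fin m) ℂ) (D : Matrix (Fin r) (Fin r) ℂ) :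
    blocks₂₂ e (diagBlocks e A D) = D := by
  simp [blocks₂₂, diagBlocks, submatrix_submatrix]

lemma blocks₁₁_deph (X : Matrix (Fin n) (Fin n) ℂ) : blocks₁₁ e (Deph X) = Deph (blocks₁₁ e X) := by
  ext i j
  simp [blocks₁₁, Deph, toBlocks₁₁, e.symm.injective.eq_iff]

lemma blocks₂₂_deph (X : Matrix (Fin n) (Fin n) ℂ) : blocks₂₂ e (Deph X) = Deph (blocks₂₂ e X) := by
  ext i j
  simp [blocks₂₂, Deph, toBlocks₂₂, e.symm.injective.eq_iff]

lemma deph_diagBlocks (A : Matrix (Fin m) (Fin m) ℂ) (D : Matrix (Fin r) (Fin r) ℂ) :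
    Deph (diagBlocks e A D) = diagBlocks e (Deph A) (Deph D) := by
  simp only [deph_eq_diagonal_diag, diagBlocks, diag_submatrix, diag_fromBlocks_zero,
    fromBlocks_diagonal, submatrix_diagonal_equiv]

lemma trace_diagBlocks (A : Matrix (Fin m) (Fin m) ℂ) (D : Matrix (Fin r) (Fin r) ℂ) :
    (diagBlocks e A D).trace = A.trace + D.trace := by
  simp only [diagBlocks, trace, diag_submatrix, Function.comp_apply, diag_fromBlocks_zero,
    e.sum_comp (Sum.elim A.diag D.diag), Fintype.sum_sum_type, Sum.elim_inl, Sum.elim_inr]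

lemma cl1_diagBlocks (A : Matrix (Fin m) (Fin m) ℂ) (D : Matrix (Fin r) (Fin r) ℂ) :
    Cl1 (diagBlocks e A D) = Cl1 A + Cl1 D := by
  calc Cl1 (diagBlocks e A D)
      = ∑ x, ∑ y, if x ≠ y then ‖fromBlocks A 0 0 D x y‖ else 0 :=
        Fintype.sum_equiv e _ _ fun i => Fintype.sum_equiv e _ _ fun j => by
          simp [diagBlocks, e.injective.ne_iff]
    _ = Cl1 A + Cl1 D := by simp [Fintype.sum_sum_type, Cl1]

lemma isDensity_diagBlocks {ρ : Matrix (Fin m) (Fin m) ℂ} (hρ : IsDensity ρ) :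
    IsDensity (diagBlocks e ρ 0) := by
  refine ⟨(hρ.1.fromBlocks_zero PosSemidef.zero).submatrix e, ?_⟩
  rw [trace_diagBlocks, hρ.2, trace_zero, add_zero]

def extendOp (Φ : Matrix (Fin m) (Fin m) ℂ → Matrix (Fin m) (Fin m) ℂ) (X : Matrix (Fin n) (Fin n) ℂ) :
    Matrix (Fin n) (Fin n) ℂ :=
  diagBlocks e (Φ (blocks₁₁ e X)) (blocks₂₂ e X)

variable {e} {Φ : Matrix (Fin m) (Fin m) ℂ → Matrix (Fin m) (Fin m) ℂ}

lemma extendOp_diagBlocks (A : Matrix (Fin m) (Fin m) ℂ) (D : Matrix (Fin r) (Fin r) ℂ) :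
    extendOp e Φ (diagBlocks e A D) = diagBlocks e (Φ A) D := by
  rw [extendOp, blocks₁₁_diagBlocks, blocks₂₂_diagBlocks]

lemma extendOp_deph (hΦ : ∀ A, Φ (Deph A) = Deph (Φ A)) (X : Matrix (Fin n) (Fin n) ℂ) :
    extendOp e Φ (Deph X) = Deph (extendOp e Φ X) := by
  rw [extendOp, extendOp, blocks₁₁_deph, blocks₂₂_deph, hΦ, deph_diagBlocks]

lemma isQuantumOp_extendOp (hΦ : IsQuantumOp Φ) : IsQuantumOp (extendOp e Φ) := by
  obtain ⟨k, K, hK, hΦK⟩ := hΦ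
  refine isQuantumOp_of_kraus
    (fun o : Option (Fin k) => o.elim (diagBlocks e 0 1) fun i => diagBlocks e (K i) 0) ?_ ?_
  · simp only [Fintype.sum_option, Option.elim, diagBlocks_conjTranspose, diagBlocks_mul,
      conjTranspose_zero, conjTranspose_one, Matrix.zero_mul, Matrix.one_mul, sum_diagBlocks_zero,
      hK, diagBlocks_add, zero_add, add_zero, diagBlocks_one]
  · intro X
    simp only [extendOp, Fintype.sum_option, Option.elim, diagBlocks_left_mul_mul_conjTranspose,
      diagBlocks_right_mul_mul_conjTranspose, sum_diagBlocks_zero, hΦK, diagBlocks_add,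
      conjTranspose_one, Matrix.one_mul, Matrix.mul_one, zero_add, add_zero]

end BlockDiagonal

section MeasurePrepare
variable {ι : Type*} [Fintype ι]

lemma vecMulVec_star_mul_mul_conjTranspose (w u : ι → ℂ) (A : Matrix ι ι ℂ) :
    vecMulVec w (star u) * A * (vecMulVec w (star u))ᴴ
      = (star u ⬝ᵥ A *ᵥ u) • vecMulVec w (star w) := by
  rw [conjTranspose_vecMulVec, star_star, vecMulVec_mul, vecMulVec_mul_vecMulVec,
    dotProduct_mulVec, vecMulVec_smul]

lemma conjTranspose_vecMulVec_star_mul_self (w u : ι → ℂ) :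
    (vecMulVec w (star u))ᴴ * vecMulVec w (star u) = (star w ⬝ᵥ w) • vecMulVec u (star u) := by
  rw [conjTranspose_vecMulVec, star_star, vecMulVec_mul_vecMulVec, vecMulVec_smul]

lemma sqrt_smul_mul_mul_conjTranspose {t : ℝ} (ht : 0 ≤ t) (M A : Matrix ι ι ℂ) :
    ((√t : ℂ) • M) * A * ((√t : ℂ) • M)ᴴ = (t : ℂ) • (M * A * Mᴴ) := by
  rw [conjTranspose_smul, Complex.star_def, Complex.conj_ofReal, smul_mul_assoc, smul_mul_assoc,
    mul_smul_comm, smul_smul, ← Complex.ofReal_mul, Real.mul_self_sqrt ht]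

lemma conjTranspose_sqrt_smul_mul_self {t : ℝ} (ht : 0 ≤ t) (M : Matrix ι ι ℂ) :
    ((√t : ℂ) • M)ᴴ * ((√t : ℂ) • M) = (t : ℂ) • (Mᴴ * M) := by
  rw [conjTranspose_smul, Complex.star_def, Complex.conj_ofReal, smul_mul_assoc,
    mul_smul_comm, smul_smul, ← Complex.ofReal_mul, Real.mul_self_sqrt ht]

end MeasurePrepare

noncomputable section

namespace Cl1Counterexample

def v : Fin 4 → Fin 4 → ℂ := ![![4, 4, -1, -1], ![1, 1, 4, 4], ![1, -1, 0, 0], ![0, 0, 1, -1]]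

def weight : Fin 4 → Fin 4 → ℝ :=
  ![![1/2176, 0, 0, 15/2176],
    ![0, 1/2448, 1/144, 1/1224],
    ![0, 1/144, 17/144, 1/72],
    ![15/2176, 1/1224, 1/72, 121/1152]]

lemma weight_nonneg (k l : Fin 4) : 0 ≤ weight k l := by
  fin_cases k <;> fin_cases l <;> norm_num [weight]

lemma star_v (k : Fin 4) : star (v k) = v k := by
  ext i
  fin_cases k <;> fin_cases i <;> simp [v]

def kraus (p : Fin 4 × Fin 4) : Matrix (Fin 4) (Fin 4) ℂ :=
  (√(weight p.1 p.2) : ℂ) • vecMulVec (v p.2) (star (v p.1))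

def Φ₄ (A : Matrix (Fin 4) (Fin 4) ℂ) : Matrix (Fin 4) (Fin 4) ℂ :=
  ∑ p, kraus p * A * (kraus p)ᴴ

lemma Φ₄_apply (A : Matrix (Fin 4) (Fin 4) ℂ) :
    Φ₄ A = ∑ k, ∑ l, ((weight k l : ℂ) * (v k ⬝ᵥ A *ᵥ v k)) • vecMulVec (v l) (v l) := by
  simp only [Φ₄, kraus, sqrt_smul_mul_mul_conjTranspose (weight_nonneg _ _),
    vecMulVec_star_mul_mul_conjTranspose, smul_smul, Fintype.sum_prod_type]
  simp only [star_v]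

lemma sum_conjTranspose_kraus_mul_kraus : ∑ p, (kraus p)ᴴ * kraus p = 1 := by
  simp only [kraus, conjTranspose_sqrt_smul_mul_self (weight_nonneg _ _),
    conjTranspose_vecMulVec_star_mul_self, smul_smul, Fintype.sum_prod_type]
  simp only [star_v]
  ext i j
  fin_cases i <;> fin_cases j <;>
    simp [Fin.sum_univ_four, weight, v, dotProduct, one_apply] <;> norm_num

lemma deph_Φ₄ (A : Matrix (Fin 4) (Fin 4) ℂ) : Deph (Φ₄ A) = (A.trace / 4) • 1 := by
  rw [Φ₄_apply]
  ext i j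
  by_cases h : i = j
  · subst h
    fin_cases i <;>
      simp [Deph, Fin.sum_univ_four, weight, v, dotProduct, mulVec, trace] <;> ring
  · simp [Deph, h, one_apply]

lemma Φ₄_deph (A : Matrix (Fin 4) (Fin 4) ℂ) : Φ₄ (Deph A) = (A.trace / 4) • 1 := by
  rw [Φ₄_apply]
  ext i j
  fin_cases i <;> fin_cases j <;>
    simp [Deph, Fin.sum_univ_four, weight, v, dotProduct, mulVec, trace] <;> ring

def ρ₄ : Matrix (Fin 4) (Fin 4) ℂ := (1 / 2 : ℂ) • vecMulVec (v 2) (v 2)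

lemma isDensity_ρ₄ : IsDensity ρ₄ := by
  refine ⟨(star_v 2 ▸ posSemidef_vecMulVec_self_star (v 2)).smul (by positivity), ?_⟩
  simp [ρ₄, trace, Fin.sum_univ_four, v]
  norm_num

lemma cl1_ρ₄ : Cl1 ρ₄ = 1 := by
  simp [Cl1, ρ₄, Fin.sum_univ_four, v]
  norm_num

lemma cl1_Φ₄_ρ₄ : Cl1 (Φ₄ ρ₄) = 23 / 18 := by
  rw [Φ₄_apply]
  simp [Cl1, ρ₄, Fin.sum_univ_four, v, weight, dotProduct, mulVec]
  norm_num

end Cl1Counterexample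

end

def ExistsDIOIncreasingCl1 (n : ℕ) : Prop :=
  ∃ Φ : Matrix (Fin n) (Fin n) ℂ → Matrix (Fin n) (Fin n) ℂ,
    IsQuantumOp Φ ∧ (∀ A, Φ (Deph A) = Deph (Φ A)) ∧
      ∃ ρ : Matrix (Fin n) (Fin n) ℂ, IsDensity ρ ∧ Cl1 ρ < Cl1 (Φ ρ)

lemma ExistsDIOIncreasingCl1.mono {m n : ℕ} (hmn : m ≤ n) (h : ExistsDIOIncreasingCl1 m) :
    ExistsDIOIncreasingCl1 n := by
  obtain ⟨Φ, hΦ, hΦΔ, ρ, hρ, hlt⟩ := h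
  let e : Fin n ≃ Fin m ⊕ Fin (n - m) := (finCongr (by omega)).trans finSumFinEquiv.symm
  refine ⟨extendOp e Φ, isQuantumOp_extendOp hΦ, extendOp_deph hΦΔ, diagBlocks e ρ 0,
    isDensity_diagBlocks e hρ, ?_⟩
  rwa [extendOp_diagBlocks, cl1_diagBlocks, cl1_diagBlocks, add_lt_add_iff_right]

lemma existsDIOIncreasingCl1_four : ExistsDIOIncreasingCl1 4 := by
  open Cl1Counterexample in
  refine ⟨Φ₄, isQuantumOp_of_kraus kraus sum_conjTranspose_kraus_mul_kraus fun _ => rfl,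
    fun A => by rw [Φ₄_deph, deph_Φ₄], ρ₄, isDensity_ρ₄, ?_⟩
  rw [cl1_ρ₄, cl1_Φ₄_ρ₄]
  norm_num

theorem l1_not_monotone_under_DIO_N_qubits (N : ℕ) (hN : 2 ≤ N) :
    ∃ Φ : Matrix (Fin (2 ^ N)) (Fin (2 ^ N)) ℂ → Matrix (Fin (2 ^ N)) (Fin (2 ^ N)) ℂ,
      IsQuantumOp Φ ∧
      (∀ A : Matrix (Fin (2 ^ N)) (Fin (2 ^ N)) ℂ, Φ (Deph A) = Deph (Φ A)) ∧
      ∃ ρ : Matrix (Fin (2 ^ N)) (Fin (2 ^ N)) ℂ, IsDensity ρ ∧ Cl1 ρ < Cl1 (Φ ρ) :=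
  existsDIOIncreasingCl1_four.mono (Nat.pow_le_pow_right two_pos hN)
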